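/- For every formula A ⊆ M and every finite set Δ of formulas with ⟦Δ⟧_pam ≠ ∅: lim_{μ→1⁻} P_μ(A | Δ) = 1 if and only if ⟦S⟧_p ⊆ ⟦A⟧_p for every cardinality-maximal possible subset S of Δ (i.e. A is a consequence of every S ∈ MPS(Δ)). -/

import Mathlib

open Classical

noncomputable section

variable {M : Type*}

/-- Likelihood of a formula (a set of models) in a model. -/
noncomputable def ell (μ : ℝ) (B : Set M) (m : M) : ℝ :=
  if m ∈ B then μ else 1 - μ

/-- Joint likelihood of a finite set of formulas in a model. -/
noncomputable def ellS (μ : ℝ) (Δ : Finset (Set M)) (m : M) : ℝ :=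
  ∏ B ∈ Δ, ell μ B m

/-- Conditional probability P_μ(A | Δ) of the generative logic model. -/
noncomputable def condP [Fintype M] (p : M → ℝ) (μ : ℝ) (A : Set M)
    (Δ : Finset (Set M)) : ℝ :=
  (∑ m, ell μ A m * ellS μ Δ m * p m) / (∑ m, ellS μ Δ m * p m)

/-- Models of a finite set of formulas. -/
def Mdl (Δ : Finset (Set M)) : Set M := {m | ∀ B ∈ Δ, m ∈ B}

/-- Possible models of a finite set of formulas. -/
def PMod (p : M → ℝ) (Δ : Finset (Set M)) : Set M :=
  {m | (∀ B ∈ Δ, m ∈ B) ∧ p m ≠ 0}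

/-- Possible models of a single formula. -/
def PModA (p : M → ℝ) (A : Set M) : Set M := {m | m ∈ A ∧ p m ≠ 0}

/-- S is a maximal consistent subset of Δ. -/
def IsMaxConsistent (Δ S : Finset (Set M)) : Prop :=
  S ⊆ Δ ∧ Mdl S ≠ ∅ ∧ ∀ B ∈ Δ \ S, Mdl (insert B S) = ∅

/-- Cardinality-maximal consistent subsets of Δ. -/
def MCS (Δ : Finset (Set M)) : Set (Finset (Set M)) :=
  {S | IsMaxConsistent Δ S ∧ ∀ S', IsMaxConsistent Δ S' → S'.card ≤ S.card}

/-- Approximate models of Δ. -/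
def AMod (Δ : Finset (Set M)) : Set M := ⋃ S ∈ MCS Δ, Mdl S

/-- S is a maximal possible subset of Δ (w.r.t. p). -/
def IsMaxPossible (p : M → ℝ) (Δ S : Finset (Set M)) : Prop :=
  S ⊆ Δ ∧ PMod p S ≠ ∅ ∧ ∀ B ∈ Δ \ S, PMod p (insert B S) = ∅

/-- Cardinality-maximal possible subsets of Δ. -/
def MPS (p : M → ℝ) (Δ : Finset (Set M)) : Set (Finset (Set M)) :=
  {S | IsMaxPossible p Δ S ∧ ∀ S', IsMaxPossible p Δ S' → S'.card ≤ S.card}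

/-- Possible approximate models of Δ. -/
def PAMod (p : M → ℝ) (Δ : Finset (Set M)) : Set M := ⋃ S ∈ MPS p Δ, PMod p S

/-!
Write `k(m)` for the number of formulas of `Δ` true in `m`, so that
`ℓ_μ(Δ, m) = μ ^ k(m) * (1 - μ) ^ (|Δ| - k(m))`, and let `K` be the largest `k(m)` over possible
models. The cardinality-maximal possible subsets of `Δ` are exactly the sets `{B ∈ Δ | m ∈ B}` of
possible models `m` with `k(m) = K`, and their possible models are exactly those `m`. Dividing
numerator and denominator of `P_μ(A | Δ)` by `μ ^ K * (1 - μ) ^ (|Δ| - K)`, every model with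
`k(m) < K` drops out as `μ → 1`, so the limit is the `p`-mass of the top models lying in `A`
divided by the `p`-mass of all top models. It equals `1` iff every possible top model lies in `A`.
-/

open Filter Topology Finset

def trueIn (Δ : Finset (Set M)) (m : M) : Finset (Set M) := {B ∈ Δ | m ∈ B}

def maxSat [Fintype M] (p : M → ℝ) (Δ : Finset (Set M)) : ℕ :=
  ({m | p m ≠ 0} : Finset M).sup fun m => #(trueIn Δ m)

def topWeight [Fintype M] (p : M → ℝ) (Δ : Finset (Set M)) (m : M) : ℝ :=
  if #(trueIn Δ m) = maxSat p Δ then p m else 0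

lemma card_trueIn_le_card (Δ : Finset (Set M)) (m : M) : #(trueIn Δ m) ≤ #Δ :=
  card_filter_le _ _

lemma ellS_eq_pow_mul_pow (μ : ℝ) (Δ : Finset (Set M)) (m : M) :
    ellS μ Δ m = μ ^ #(trueIn Δ m) * (1 - μ) ^ (#Δ - #(trueIn Δ m)) := by
  rw [ellS, ← prod_filter_mul_prod_filter_not Δ (m ∈ ·), trueIn,
    ← card_sdiff_of_subset (filter_subset _ _), ← filter_not]
  congr 1 <;> exact prod_eq_pow_card fun B hB => by simp_all [ell]

lemma continuous_ell (B : Set M) (m : M) : Continuous fun μ => ell μ B m := by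
  unfold ell
  split_ifs <;> fun_prop

lemma ell_one (B : Set M) (m : M) : ell 1 B m = if m ∈ B then 1 else 0 := by
  simp [ell]

section Combinatorics

variable {p : M → ℝ} {Δ S : Finset (Set M)} {m : M}

lemma subset_trueIn_of_mem_PMod (hS : S ⊆ Δ) (hm : m ∈ PMod p S) : S ⊆ trueIn Δ m :=
  fun B hB => mem_filter.2 ⟨hS hB, hm.1 B hB⟩

lemma mem_PMod_trueIn_iff : m ∈ PMod p (trueIn Δ m) ↔ p m ≠ 0 :=
  ⟨And.right, fun hm => ⟨fun _ hB => (mem_filter.1 hB).2, hm⟩⟩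

variable [Fintype M]

lemma card_trueIn_le_maxSat (hm : p m ≠ 0) : #(trueIn Δ m) ≤ maxSat p Δ :=
  le_sup (f := fun m => #(trueIn Δ m)) (mem_filter.2 ⟨mem_univ m, hm⟩)

lemma maxSat_le_card : maxSat p Δ ≤ #Δ :=
  Finset.sup_le fun m _ => card_trueIn_le_card Δ m

lemma card_le_maxSat_of_mem_PMod (hS : S ⊆ Δ) (hm : m ∈ PMod p S) : #S ≤ maxSat p Δ :=
  (card_le_card (subset_trueIn_of_mem_PMod hS hm)).trans (card_trueIn_le_maxSat hm.2)

lemma exists_card_trueIn_eq_maxSat (hm : p m ≠ 0) :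
    ∃ m', p m' ≠ 0 ∧ #(trueIn Δ m') = maxSat p Δ := by
  obtain ⟨m', hm', hmax⟩ :=
    exists_mem_eq_sup {m | p m ≠ 0} ⟨m, by simpa using hm⟩ fun m => #(trueIn Δ m)
  exact ⟨m', by simpa using hm', hmax.symm⟩

lemma trueIn_mem_MPS (hm : p m ≠ 0) (hmax : #(trueIn Δ m) = maxSat p Δ) :
    trueIn Δ m ∈ MPS p Δ := by
  refine ⟨⟨filter_subset _ _, (Set.nonempty_of_mem (mem_PMod_trueIn_iff.2 hm)).ne_empty, ?_⟩,
    fun S' hS' => ?_⟩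
  · intro B hB
    obtain ⟨hBΔ, hBm⟩ := mem_sdiff.1 hB
    by_contra hne
    obtain ⟨m', hm'⟩ := Set.nonempty_iff_ne_empty.2 hne
    have hsub : insert B (trueIn Δ m) ⊆ Δ := insert_subset hBΔ (filter_subset _ _)
    have := card_le_maxSat_of_mem_PMod hsub hm'
    rw [card_insert_of_notMem hBm] at this
    omega
  · obtain ⟨m', hm'⟩ := Set.nonempty_iff_ne_empty.2 hS'.2.1
    exact hmax ▸ card_le_maxSat_of_mem_PMod hS'.1 hm'

lemma card_trueIn_eq_maxSat_of_mem_MPS (hS : S ∈ MPS p Δ) (hm : m ∈ PMod p S) :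
    #(trueIn Δ m) = maxSat p Δ := by
  obtain ⟨m', hm', hmax⟩ := exists_card_trueIn_eq_maxSat (Δ := Δ) hm.2
  have hle : maxSat p Δ ≤ #S := hmax ▸ hS.2 _ (trueIn_mem_MPS hm' hmax).1
  exact (card_trueIn_le_maxSat hm.2).antisymm
    (hle.trans (card_le_card (subset_trueIn_of_mem_PMod hS.1.1 hm)))

lemma forall_MPS_PMod_subset_iff {A : Set M} :
    (∀ S ∈ MPS p Δ, PMod p S ⊆ PModA p A) ↔
      ∀ m, p m ≠ 0 → #(trueIn Δ m) = maxSat p Δ → m ∈ A := by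
  refine ⟨fun h m hm hmax => (h _ (trueIn_mem_MPS hm hmax) (mem_PMod_trueIn_iff.2 hm)).1,
    fun h S hS m hm => ⟨h m hm.2 (card_trueIn_eq_maxSat_of_mem_MPS hS hm), hm.2⟩⟩

end Combinatorics

lemma tendsto_pow_mul_one_sub_pow_div {k K d : ℕ} (hkK : k ≤ K) (hKd : K ≤ d) :
    Tendsto (fun μ : ℝ => μ ^ k * (1 - μ) ^ (d - k) / (μ ^ K * (1 - μ) ^ (d - K))) (𝓝[<] 1)
      (𝓝 (if k = K then 1 else 0)) := by
  have hcont : ContinuousAt (fun μ : ℝ => ((1 - μ) / μ) ^ (K - k)) 1 := by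
    fun_prop (disch := norm_num)
  have hlim := hcont.tendsto.mono_left (nhdsWithin_le_nhds (s := Set.Iio 1))
  have hval : (0 : ℝ) ^ (K - k) = if k = K then 1 else 0 := by
    rcases hkK.eq_or_lt with rfl | hlt
    · simp
    · simp [hlt.ne, zero_pow (Nat.sub_ne_zero_of_lt hlt)]
  rw [sub_self, zero_div, hval] at hlim
  refine hlim.congr' (eventually_of_mem (Ioo_mem_nhdsLT zero_lt_one) fun μ hμ => ?_)
  have hμ0 : μ ≠ 0 := hμ.1.ne'
  have h1μ : 1 - μ ≠ 0 := sub_ne_zero.2 hμ.2.ne'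
  obtain ⟨j, rfl⟩ := Nat.exists_eq_add_of_le hkK
  obtain ⟨e, rfl⟩ := Nat.exists_eq_add_of_le hKd
  rw [show k + j + e - k = j + e by omega, Nat.add_sub_cancel_left, Nat.add_sub_cancel_left,
    div_pow]
  simp only [pow_add]
  field_simp

section Limit

variable [Fintype M] {p : M → ℝ} {Δ : Finset (Set M)}

lemma topWeight_ne_zero_iff {m : M} :
    topWeight p Δ m ≠ 0 ↔ p m ≠ 0 ∧ #(trueIn Δ m) = maxSat p Δ := by
  simp [topWeight, and_comm]

lemma topWeight_nonneg (hp : ∀ m, 0 ≤ p m) (m : M) : 0 ≤ topWeight p Δ m := by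
  unfold topWeight
  split_ifs
  exacts [hp m, le_rfl]

lemma tendsto_ellS_mul_div (m : M) :
    Tendsto (fun μ => ellS μ Δ m * p m / (μ ^ maxSat p Δ * (1 - μ) ^ (#Δ - maxSat p Δ)))
      (𝓝[<] 1) (𝓝 (topWeight p Δ m)) := by
  by_cases hm : p m = 0
  · simp [hm, topWeight]
  · have := (tendsto_pow_mul_one_sub_pow_div (card_trueIn_le_maxSat (Δ := Δ) hm)
      maxSat_le_card).mul_const (p m)
    simp_rw [ellS_eq_pow_mul_pow, mul_div_right_comm _ (p m)]
    convert this using 2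
    simp [topWeight]

lemma tendsto_condP {A : Set M} (hpos : ∑ m, topWeight p Δ m ≠ 0) :
    Tendsto (fun μ => condP p μ A Δ) (𝓝[<] 1)
      (𝓝 ((∑ m, ell 1 A m * topWeight p Δ m) / ∑ m, topWeight p Δ m)) := by
  have hden := tendsto_finsetSum univ fun m _ => tendsto_ellS_mul_div (p := p) (Δ := Δ) m
  have hnum := tendsto_finsetSum univ fun m _ =>
    (((continuous_ell A m).tendsto 1).mono_left nhdsWithin_le_nhds).mul
      (tendsto_ellS_mul_div (p := p) (Δ := Δ) m)
  refine (hnum.div hden hpos).congr' (eventually_of_mem (Ioo_mem_nhdsLT zero_lt_one) fun μ hμ => ?_)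
  have hscale : μ ^ maxSat p Δ * (1 - μ) ^ (#Δ - maxSat p Δ) ≠ 0 :=
    mul_ne_zero (pow_ne_zero _ hμ.1.ne') (pow_ne_zero _ (sub_ne_zero.2 hμ.2.ne'))
  simp only [condP, ← mul_div_assoc, ← mul_assoc, ← sum_div]
  exact div_div_div_cancel_right₀ hscale _ _

end Limit

lemma sum_ell_one_mul_eq_sum_iff [Fintype M] {q : M → ℝ} (hq : ∀ m, 0 ≤ q m) (A : Set M) :
    ∑ m, ell 1 A m * q m = ∑ m, q m ↔ ∀ m, q m ≠ 0 → m ∈ A := by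
  rw [eq_comm, ← sub_eq_zero, ← sum_sub_distrib,
    sum_eq_zero_iff_of_nonneg fun m _ => by by_cases hm : m ∈ A <;> simp [ell_one, hm, hq m]]
  refine forall_congr' fun m => ?_
  by_cases hm : m ∈ A <;> simp [ell_one, hm]

theorem stmt_14_general [Fintype M] (p : M → ℝ)
    (hp : ∀ m, 0 ≤ p m)
    (A : Set M) (Δ : Finset (Set M)) (h : PAMod p Δ ≠ ∅) :
    Filter.Tendsto (fun μ => condP p μ A Δ)
        (nhdsWithin 1 (Set.Ico (0 : ℝ) 1)) (nhds 1) ↔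
      ∀ S ∈ MPS p Δ, PMod p S ⊆ PModA p A := by
  obtain ⟨m, hm⟩ := Set.nonempty_iff_ne_empty.2 h
  obtain ⟨S, hS, hmS⟩ := Set.mem_iUnion₂.1 hm
  obtain ⟨m', hm', hmax⟩ := exists_card_trueIn_eq_maxSat (Δ := Δ) hmS.2
  have hpos : 0 < ∑ m, topWeight p Δ m :=
    sum_pos' (fun m _ => topWeight_nonneg hp m)
      ⟨m', mem_univ _, by simpa [topWeight, hmax] using (hp m').lt_of_ne' hm'⟩
  have hlimit_eq_one : (∑ m, ell 1 A m * topWeight p Δ m) / ∑ m, topWeight p Δ m = 1 ↔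
      ∀ m, p m ≠ 0 → #(trueIn Δ m) = maxSat p Δ → m ∈ A := by
    rw [div_eq_one_iff_eq hpos.ne', sum_ell_one_mul_eq_sum_iff (topWeight_nonneg hp)]
    simp only [topWeight_ne_zero_iff, and_imp]
  have hlim := tendsto_condP (A := A) hpos.ne'
  rw [nhdsWithin_Ico_eq_nhdsLT zero_lt_one, forall_MPS_PMod_subset_iff]
  exact ⟨fun h1 => hlimit_eq_one.1 (tendsto_nhds_unique hlim h1),
    fun h1 => by rwa [hlimit_eq_one.2 h1] at hlim⟩

/-- the μ → 1⁻ limit of the conditional probability is 1 iff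
A is a consequence of every cardinality-maximal possible subset of Δ. -/
theorem stmt_14 [Fintype M] [Nonempty M] (p : M → ℝ)
    (hp : ∀ m, 0 ≤ p m) (hps : ∑ m, p m = 1)
    (A : Set M) (Δ : Finset (Set M)) (h : PAMod p Δ ≠ ∅) :
    Filter.Tendsto (fun μ => condP p μ A Δ)
        (nhdsWithin 1 (Set.Ico (0 : ℝ) 1)) (nhds 1) ↔
      ∀ S ∈ MPS p Δ, PMod p S ⊆ PModA p A :=
  stmt_14_general p hp A Δ h
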